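/- arXiv:2003.09484 — 4 statements merged into one kernel-verified Lean document; each statement's English description precedes it below -/
import Mathlib

section
/- Let Y₁ and Y₂ be real 2×2 matrices each of determinant 1. Then Φ₂₁(Y₁ · Y₂) = Φ₂₁(Y₁) · Φ₂₁(Y₂); that is, Φ₂₁ restricted to SL(2,ℝ) is a group homomorphism. -/
open Matrix

/-- The covering map `Φ₂₁ : SL(2,ℝ) → SO⁺(2,1)`, written out entrywise. -/
noncomputable def Phi21 (Y : Matrix (Fin 2) (Fin 2) ℝ) : Matrix (Fin 3) (Fin 3) ℝ :=
  let y₁ := Y 0 0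
  let y₂ := Y 0 1
  let y₃ := Y 1 0
  let y₄ := Y 1 1
  !![1 + 2*y₂*y₃, y₂*y₄ - y₁*y₃, -(y₁*y₃ + y₂*y₄);
     y₃*y₄ - y₁*y₂, (y₁^2 - y₂^2 - y₃^2 + y₄^2)/2, (y₁^2 + y₂^2 - y₃^2 - y₄^2)/2;
     -(y₁*y₂ + y₃*y₄), (y₁^2 - y₂^2 + y₃^2 - y₄^2)/2, (y₁^2 + y₂^2 + y₃^2 + y₄^2)/2]

/-- The indefinite form matrix `I_{2,1} = diag(1,1,−1)`. -/
def I21 : Matrix (Fin 3) (Fin 3) ℝ := Matrix.diagonal ![1, 1, -1]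

set_option maxHeartbeats 1000000 in
theorem stmt_3 (Y₁ Y₂ : Matrix (Fin 2) (Fin 2) ℝ) (h₁ : Y₁.det = 1) (h₂ : Y₂.det = 1) :
    Phi21 (Y₁ * Y₂) = Phi21 Y₁ * Phi21 Y₂ := by
  rw [Matrix.det_fin_two] at h₁ h₂
  ext i j
  fin_cases i <;> fin_cases j <;>
    simp [Phi21, Matrix.mul_apply, Fin.sum_univ_succ] <;>
    first
    | linear_combination (2*(Y₂ 0 1)*(Y₂ 1 0)) * h₁ + (2*(Y₁ 0 1)*(Y₁ 1 0)) * h₂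
    | linear_combination ((Y₂ 0 1)*(Y₂ 1 1) - (Y₂ 0 0)*(Y₂ 1 0)) * h₁
    | linear_combination (-(Y₂ 0 1)*(Y₂ 1 1) - (Y₂ 0 0)*(Y₂ 1 0)) * h₁
    | linear_combination ((Y₁ 1 0)*(Y₁ 1 1) - (Y₁ 0 0)*(Y₁ 0 1)) * h₂
    | linear_combination (-(Y₁ 1 0)*(Y₁ 1 1) - (Y₁ 0 0)*(Y₁ 0 1)) * h₂
    | ring
end

section
/- Let Y be a symmetric real 2×2 matrix with det Y = 1. Then the 3×3 matrix Φ₂₁(Y) is positive definite. (In the proof, the leading 2×2 principal minor of Φ₂₁(Y) is shown to equal 2y₂² + ½(y₁ − y₄)² + 1 > 0, where y₁, y₂, y₂, y₄ are the entries of Y.) -/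
/-!
For symmetric `Y = [[a, b], [b, d]]` with `ad - b² = 1` we have `a ≠ 0`, and
`X = |a|^{-1/2} [[a, b], [0, 1]]` lies in `SL(2,ℝ)` with `Y = ±XᵀX`. Since `Φ₂₁` is even,
multiplicative and commutes with transposition, `Φ₂₁(Y) = Φ₂₁(X)ᵀ Φ₂₁(X)`, a Gram matrix of an
invertible matrix. Clearing the square root, `a² Φ₂₁(Y) = FᵀF` with `F` polynomial in `a, b`
and `det F = a³ ≠ 0`.
-/

open Matrix

/-- `a Φ₂₁(X)` for `X = |a|^{-1/2} [[a, b], [0, 1]]`, with the entry `1 + 2 x₂ x₃` of `Φ₂₁`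
homogenised to `x₁ x₄ + x₂ x₃` using `det X = 1`. -/
noncomputable def phi21Factor (a b : ℝ) : Matrix (Fin 3) (Fin 3) ℝ :=
  !![a, b, -b;
     -(a * b), (a ^ 2 - b ^ 2 + 1) / 2, (a ^ 2 + b ^ 2 - 1) / 2;
     -(a * b), (a ^ 2 - b ^ 2 - 1) / 2, (a ^ 2 + b ^ 2 + 1) / 2]

theorem det_phi21Factor (a b : ℝ) : (phi21Factor a b).det = a ^ 3 := by
  simp [phi21Factor, det_fin_three]
  ring

theorem sq_smul_phi21_eq_transpose_mul_self {a b d : ℝ} (h : a * d - b ^ 2 = 1) :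
    a ^ 2 • Phi21 !![a, b; b, d] = (phi21Factor a b)ᵀ * phi21Factor a b := by
  ext i j
  fin_cases i <;> fin_cases j <;> simp [Phi21, phi21Factor, mul_apply, Fin.sum_univ_three] <;> grind

theorem posDef_phi21_of_det_eq_one {a b d : ℝ} (h : a * d - b ^ 2 = 1) :
    (Phi21 !![a, b; b, d]).PosDef := by
  have ha : a ≠ 0 := by
    rintro rfl
    nlinarith [sq_nonneg b]
  have hF : Function.Injective (phi21Factor a b).mulVec := by
    refine mulVec_injective_of_isUnit ?_
    rw [isUnit_iff_isUnit_det, det_phi21Factor]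
    exact (pow_ne_zero 3 ha).isUnit
  have hPhi : Phi21 !![a, b; b, d] = (a ^ 2)⁻¹ • ((phi21Factor a b)ᴴ * phi21Factor a b) := by
    rw [conjTranspose_eq_transpose_of_trivial, ← sq_smul_phi21_eq_transpose_mul_self h, smul_smul,
      inv_mul_cancel₀ (pow_ne_zero 2 ha), one_smul]
  rw [hPhi]
  exact (PosDef.conjTranspose_mul_self _ hF).smul (by positivity)

theorem stmt_6 (Y : Matrix (Fin 2) (Fin 2) ℝ) (hsym : Yᵀ = Y) (hY : Y.det = 1) :
    (Phi21 Y).PosDef := by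
  have h10 : Y 1 0 = Y 0 1 := congrFun (congrFun hsym 0) 1
  rw [det_fin_two, h10, ← sq] at hY
  rw [eta_fin_two Y, h10]
  exact posDef_phi21_of_det_eq_one hY
end

section
/- Let X be a real 3×3 positive definite matrix satisfying Xᵀ · I_{2,1} · X = I_{2,1} and det X = 1 (i.e. X is a positive definite element of SO⁺(2,1)). Then there exists a positive definite real 2×2 matrix Y with det Y = 1 such that Φ₂₁(Y) = X. -/
open Matrix

/-! For symmetric `X` the relation `Xᵀ I₂₁ X = I₂₁` says that `I₂₁ X` is an involution; with
`det X = 1` and `X₀₀ > 0` it is a reflection, so `X - I₂₁` has rank one: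
`(X₂₂ + 1) (X - I₂₁) = w wᵀ` with `w` the last column of `X - I₂₁`. On the other side, for
symmetric `Y = !![a, b; b, d]` of determinant one, `2 (Φ₂₁ Y - I₂₁) = v vᵀ` with
`v = (-2b, a - d, a + d)`, and `v₂² - v₀² - v₁² = 4 det Y`. So rescaling `w` to Minkowski norm `4`
and solving for `a, b, d` gives the required `Y`; it is positive definite because `v₂ > |v₁|`. -/

lemma I21_mul_I21 : I21 * I21 = 1 := by
  rw [I21, diagonal_mul_diagonal, ← diagonal_one]
  congr 1
  ext i
  fin_cases i <;> norm_num

theorem Matrix.adjugate_eq_of_transpose_mul_mul_eq {n R : Type*} [Fintype n] [DecidableEq n]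
    [CommRing R] {J X : Matrix n n R} (hJ : J * J = 1) (h : Xᵀ * J * X = J)
    (hdet : X.det = 1) :
    X.adjugate = J * Xᵀ * J := by
  have hinv : J * Xᵀ * J * X = 1 := by
    simp only [Matrix.mul_assoc] at h ⊢
    rw [h, hJ]
  rw [← inv_eq_left_inv hinv, inv_def, hdet]
  simp

/-- For `X = !![p, x, y; x, q, z; y, z, r]`, the hypotheses are entries of `Xᵀ I₂₁ X = I₂₁` and
`adj X = I₂₁ X I₂₁`, and the conclusion is `tr (I₂₁ X) = 1`. -/
lemma add_eq_add_one_of_lorentz {p q r x y z : ℝ} (hp : 0 < p)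
    (h00 : p ^ 2 + x ^ 2 - y ^ 2 = 1) (h22 : y ^ 2 + z ^ 2 - r ^ 2 = -1)
    (c00 : q * r - z ^ 2 = p) (c11 : p * r - y ^ 2 = q) (c22 : p * q - x ^ 2 = r) :
    p + q = r + 1 := by
  have hfac : (r - 1) * (p + q - r - 1) = 0 := by linear_combination c00 + c11 + h22
  rcases mul_eq_zero.mp hfac with hr | hD
  · have hyz : y ^ 2 + z ^ 2 = 0 := by linear_combination h22 + (r + 1) * hr
    have hy : y = 0 := by nlinarith [sq_nonneg y, sq_nonneg z]
    have hz : z = 0 := by nlinarith [sq_nonneg y, sq_nonneg z]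
    subst hy hz
    -- here `X = diag(p, p, 1)` with `p ^ 2 = 1`, and `0 < p` rules out `X = -I₂₁`
    have hpq : q = p := by linear_combination c00 - q * hr
    subst hpq
    have hq1 : q = 1 := by nlinarith
    linear_combination 2 * hq1 - hr
  · linear_combination hD

lemma I21_eq : I21 = !![1, 0, 0; 0, 1, 0; 0, 0, -1] := by
  ext i j; fin_cases i <;> fin_cases j <;> rfl

lemma Matrix.eta_fin_three_of_transpose_eq {R : Type*} {X : Matrix (Fin 3) (Fin 3) R}
    (hsym : Xᵀ = X) :
    X = !![X 0 0, X 0 1, X 0 2; X 0 1, X 1 1, X 1 2; X 0 2, X 1 2, X 2 2] := by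
  have hX : ∀ i j, X j i = X i j := fun i j => by rw [← transpose_apply X, hsym]
  ext i j
  fin_cases i <;> fin_cases j <;> first | rfl | exact hX _ _

lemma smul_sub_I21_eq_vecMulVec {X : Matrix (Fin 3) (Fin 3) ℝ} (hsym : Xᵀ = X)
    (hso : Xᵀ * I21 * X = I21) (hdet : X.det = 1) (hp : 0 < X 0 0) :
    (X 2 2 + 1) • (X - I21) =
      vecMulVec ![X 0 2, X 1 2, X 2 2 + 1] ![X 0 2, X 1 2, X 2 2 + 1] := by
  have hadj := adjugate_eq_of_transpose_mul_mul_eq I21_mul_I21 hso hdet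
  rw [hsym] at hso hadj
  obtain ⟨p, q, r, x, y, z, rfl⟩ : ∃ p q r x y z, X = !![p, x, y; x, q, z; y, z, r] :=
    ⟨_, _, _, _, _, _, eta_fin_three_of_transpose_eq hsym⟩
  rw [I21_eq] at hso hadj ⊢
  simp [adjugate_fin_three_of] at hso hadj hp
  obtain ⟨⟨h00, h01, -⟩, ⟨-, h11, -⟩, -, -, h22⟩ := hso
  obtain ⟨⟨c00, c01, -⟩, ⟨-, c11, -⟩, -, -, c22⟩ := hadj
  have htr : p + q = r + 1 :=
    add_eq_add_one_of_lorentz (q := q) (r := r) (x := x) (y := y) (z := z) hp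
      (by linear_combination h00) (by linear_combination h22) (by linear_combination c00)
      (by linear_combination c11) (by linear_combination c22)
  ext i j
  fin_cases i <;> fin_cases j <;> simp [vecMulVec]
  · linear_combination (c11 + c22 + h00 - (p - 1) * htr) / 2
  · linear_combination (h01 - c01 - x * htr) / 2
  · ring
  · linear_combination (h01 - c01 - x * htr) / 2
  · linear_combination (c00 + c22 + h11 - (q - 1) * htr) / 2
  · ring

lemma col_two_sq_add_sq {X : Matrix (Fin 3) (Fin 3) ℝ} (hso : Xᵀ * I21 * X = I21) :
    X 0 2 ^ 2 + X 1 2 ^ 2 = X 2 2 ^ 2 - 1 := by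
  have h := congrFun₂ hso 2 2
  simp [mul_apply, Fin.sum_univ_three, I21] at h
  linear_combination h

lemma Matrix.posDef_fin_two_of {a b d : ℝ} (ha : 0 < a) (hdet : 0 < a * d - b ^ 2) :
    !![a, b; b, d].PosDef := by
  refine PosDef.of_dotProduct_mulVec_pos ?_ fun v hv => ?_
  · ext i j
    fin_cases i <;> fin_cases j <;> rfl
  have hsq : a * (v 0 * (a * v 0 + b * v 1) + v 1 * (b * v 0 + d * v 1)) =
      (a * v 0 + b * v 1) ^ 2 + (a * d - b ^ 2) * v 1 ^ 2 := by ring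
  simp only [star_trivial, dotProduct, mulVec, Fin.sum_univ_two, of_apply, cons_val',
    cons_val_zero, cons_val_one, empty_val', cons_val_fin_one]
  refine pos_of_mul_pos_right (hsq ▸ ?_) ha.le
  rcases eq_or_ne (v 1) 0 with h1 | h1
  · have h0 : v 0 ≠ 0 := fun h0 => hv (by ext i; fin_cases i <;> simp [h0, h1])
    simpa [h1] using sq_pos_of_ne_zero (mul_ne_zero ha.ne' h0)
  · exact add_pos_of_nonneg_of_pos (sq_nonneg _) (mul_pos hdet (sq_pos_of_ne_zero h1))

/-- Inverts `!![a, b; b, d] ↦ (-2b, a - d, a + d)`. -/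
noncomputable def symOfVec (v : Fin 3 → ℝ) : Matrix (Fin 2) (Fin 2) ℝ :=
  !![(v 2 + v 1) / 2, -v 0 / 2; -v 0 / 2, (v 2 - v 1) / 2]

lemma det_symOfVec (v : Fin 3 → ℝ) : (symOfVec v).det = (v 2 ^ 2 - v 0 ^ 2 - v 1 ^ 2) / 4 := by
  rw [symOfVec, det_fin_two_of]
  ring

lemma posDef_symOfVec {v : Fin 3 → ℝ} (h2 : 0 < v 2) (hv : v 0 ^ 2 + v 1 ^ 2 < v 2 ^ 2) :
    (symOfVec v).PosDef := by
  obtain ⟨h1, -⟩ := abs_lt_of_sq_lt_sq' (a := v 1) (by nlinarith [sq_nonneg (v 0)]) h2.le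
  exact posDef_fin_two_of (by linarith) (by linarith)

lemma Phi21_symOfVec {v : Fin 3 → ℝ} (hv : v 2 ^ 2 - v 0 ^ 2 - v 1 ^ 2 = 4) :
    Phi21 (symOfVec v) = I21 + (2 : ℝ)⁻¹ • vecMulVec v v := by
  rw [I21_eq]
  ext i j
  fin_cases i <;> fin_cases j <;> simp [Phi21, symOfVec, vecMulVec] <;>
    first | ring1 | linear_combination hv / 4 | linear_combination -hv / 4

theorem stmt_8 (X : Matrix (Fin 3) (Fin 3) ℝ) (hpos : X.PosDef)
    (hso : Xᵀ * I21 * X = I21) (hdet : X.det = 1) :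
    ∃ Y : Matrix (Fin 2) (Fin 2) ℝ, Y.PosDef ∧ Y.det = 1 ∧ Phi21 Y = X := by
  have hsym : Xᵀ = X := by
    simpa [conjTranspose_eq_transpose_of_trivial] using hpos.isHermitian.eq
  have hr : 0 < X 2 2 + 1 := by linarith [hpos.diag_pos (i := 2)]
  have hrank := smul_sub_I21_eq_vecMulVec hsym hso hdet hpos.diag_pos
  have hnorm := col_two_sq_add_sq hso
  set w : Fin 3 → ℝ := ![X 0 2, X 1 2, X 2 2 + 1]
  obtain ⟨c, hc0, hc⟩ : ∃ c : ℝ, 0 < c ∧ c ^ 2 * (X 2 2 + 1) = 2 :=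
    ⟨√(2 / (X 2 2 + 1)), by positivity, by rw [Real.sq_sqrt (by positivity)]; field_simp⟩
  have hv : (c • w) 2 ^ 2 - (c • w) 0 ^ 2 - (c • w) 1 ^ 2 = 4 := by
    simp [w]
    linear_combination -c ^ 2 * hnorm + 2 * hc
  refine ⟨symOfVec (c • w), posDef_symOfVec ?_ (by linarith), ?_, ?_⟩
  · simpa [w] using mul_pos hc0 hr
  · rw [det_symOfVec, hv]; norm_num
  · have hscale : (2⁻¹ * c * c) * (X 2 2 + 1) = 1 := by linear_combination hc / 2
    calc Phi21 (symOfVec (c • w)) = I21 + (2⁻¹ * c * c) • vecMulVec w w := by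
          rw [Phi21_symOfVec hv, smul_vecMulVec, vecMulVec_smul, smul_smul, smul_smul]
      _ = X := by rw [← hrank, smul_smul, hscale, one_smul, add_sub_cancel]
end

section
/- Let X = (X_{ij}) be a real 3×3 positive definite matrix satisfying Xᵀ · I_{2,1} · X = I_{2,1}, det X = 1, and X₁₁ > 1. Define y₂ = √((X₁₁ − 1)/2), y₁ = −(X₁₂ + X₁₃)/(2y₂), y₄ = (X₁₂ − X₁₃)/(2y₂), and let Y be the symmetric 2×2 matrix with first row (y₁, y₂) and second row (y₂, y₄). Then Φ₂₁(Y) = X. -/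
open Matrix

/-!
Write the symmetric matrix `X` as `!![a, b, c; b, d, e; c, e, f]`. The entries of
`Xᵀ I₂₁ X = I₂₁` force `(d + f) (f - d - (a - 1)) (f - d - (a + 1)) = 0`; positive definiteness
gives `d + f > 0`, and `f - d = a + 1` would make `det X = -1`. Once `f - d = a - 1`, the remaining
relations are `b c = e (a - 1)` and `b² + c² = 2 d (a - 1) + (a - 1)²`, which are exactly what
`Φ₂₁ !![y₁, y₂; y₂, y₄] = X` asks for, since its first row is
`(1 + 2 y₂², y₂ (y₄ - y₁), -y₂ (y₁ + y₄)) = (a, b, c)`.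
-/

theorem Matrix.IsSymm.eq_fin_three {R : Type*} {X : Matrix (Fin 3) (Fin 3) R} (hX : X.IsSymm) :
    X = !![X 0 0, X 0 1, X 0 2; X 0 1, X 1 1, X 1 2; X 0 2, X 1 2, X 2 2] := by
  nth_rw 1 [eta_fin_three X]
  rw [hX.apply 0 1, hX.apply 0 2, hX.apply 1 2]

section Lorentz

variable {a b c d e f : ℝ}

theorem lorentz_relations_of_symm
    (hso : !![a, b, c; b, d, e; c, e, f]ᵀ * I21 * !![a, b, c; b, d, e; c, e, f] = I21) :
    a^2 + b^2 - c^2 = 1 ∧ a*b + b*d - c*e = 0 ∧ a*c + b*e - c*f = 0 ∧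
      b^2 + d^2 - e^2 = 1 ∧ b*c + d*e - e*f = 0 ∧ c^2 + e^2 - f^2 = -1 := by
  have h i j := congrFun (congrFun hso i) j
  simp only [mul_apply, I21, Fin.sum_univ_three, transpose_apply, diagonal_apply] at h
  have h00 := h 0 0
  have h01 := h 0 1
  have h02 := h 0 2
  have h11 := h 1 1
  have h12 := h 1 2
  have h22 := h 2 2
  simp only [Fin.isValue, of_apply, cons_val', cons_val_zero, cons_val_fin_one, ↓reduceIte, mul_one,
    cons_val_one, one_ne_zero, mul_zero, add_zero, cons_val, Fin.reduceEq, zero_ne_one, zero_add,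
    mul_neg, neg_mul] at h00 h01 h02 h11 h12 h22
  exact ⟨by linear_combination h00, by linear_combination h01, by linear_combination h02,
    by linear_combination h11, by linear_combination h12, by linear_combination h22⟩

theorem det_eq_neg_one_of_sub_eq_add_one
    (hso : !![a, b, c; b, d, e; c, e, f]ᵀ * I21 * !![a, b, c; b, d, e; c, e, f] = I21)
    (hfd : f - d = a + 1) : (!![a, b, c; b, d, e; c, e, f]).det = -1 := by
  obtain ⟨h00, -, -, h11, h12, h22⟩ := lorentz_relations_of_symm hso
  have hb2 : b^2 = (a+1)*(d+1) := by
    linear_combination (h00 + h11 + h22)/2 + ((f+d+a+1)/2)*hfd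
  have hc2 : c^2 = (a+1)*(d+a) := by
    linear_combination (h11 + h22 - h00)/2 + ((f+d+a+1)/2)*hfd
  have he2 : e^2 = (a+1)*(d+1) + d^2 - 1 := by
    linear_combination -h11 + hb2
  have hbc : b*c = e*(a+1) := by
    linear_combination h12 + e*hfd
  simp only [det_fin_three, Fin.isValue, of_apply, cons_val', cons_val_zero, cons_val_fin_one,
    cons_val_one, cons_val]
  linear_combination 2*e*hbc + (a+2)*he2 - d*hc2 - f*hb2 + (a*d-(a+1)*(d+1))*hfd

theorem sub_eq_sub_one_of_det_eq_one
    (hso : !![a, b, c; b, d, e; c, e, f]ᵀ * I21 * !![a, b, c; b, d, e; c, e, f] = I21)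
    (hdet : (!![a, b, c; b, d, e; c, e, f]).det = 1) (hdf : 0 < d + f) : f - d = a - 1 := by
  obtain ⟨h00, h01, h02, h11, -, h22⟩ := lorentz_relations_of_symm hso
  have key : (f + d) * ((f - d - (a - 1)) * (f - d - (a + 1))) = 0 := by
    linear_combination (-2*b)*h01 + (-2*c)*h02 - (f - d - 2*a)*(h11 + h22) + (f + d)*h00
  rcases mul_eq_zero.mp key with h | h
  · linarith
  rcases mul_eq_zero.mp h with h | h
  · linarith
  have := det_eq_neg_one_of_sub_eq_add_one hso (by linarith)
  linarith

theorem Phi21_eq_of_sub_eq_sub_one {s : ℝ}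
    (hso : !![a, b, c; b, d, e; c, e, f]ᵀ * I21 * !![a, b, c; b, d, e; c, e, f] = I21)
    (hfd : f - d = a - 1) (hs : s^2 = (a - 1)/2) (hs0 : s ≠ 0) :
    Phi21 !![-(b + c)/(2*s), s; s, (b - c)/(2*s)] = !![a, b, c; b, d, e; c, e, f] := by
  obtain ⟨-, -, -, h11, h12, h22⟩ := lorentz_relations_of_symm hso
  have hbc : b*c = e*(a-1) := by linear_combination h12 + e*hfd
  have hd : b^2 + c^2 = 2*d*(a-1) + (a-1)^2 := by
    linear_combination h11 + h22 + (f+d+a-1)*hfd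
  obtain rfl : a = 2 * s^2 + 1 := by linarith
  obtain rfl : f = d + 2 * s^2 := by linarith
  ext i j
  fin_cases i <;> fin_cases j <;>
    simp only [Phi21, Fin.isValue, of_apply, cons_val', cons_val_one, cons_val_fin_one,
      cons_val_zero, Fin.zero_eta, Fin.mk_one, Fin.reduceFinMk, cons_val] <;>
    field_simp <;> linarith

end Lorentz

theorem stmt_9 (X : Matrix (Fin 3) (Fin 3) ℝ) (hpos : X.PosDef)
    (hso : Xᵀ * I21 * X = I21) (hdet : X.det = 1) (h11 : 1 < X 0 0)
    (y₁ y₂ y₄ : ℝ)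
    (hy₂ : y₂ = Real.sqrt ((X 0 0 - 1) / 2))
    (hy₁ : y₁ = -(X 0 1 + X 0 2) / (2 * y₂))
    (hy₄ : y₄ = (X 0 1 - X 0 2) / (2 * y₂)) :
    Phi21 !![y₁, y₂; y₂, y₄] = X := by
  have hX := (isHermitian_iff_isSymm.mp hpos.isHermitian).eq_fin_three
  rw [hX] at hso hdet
  have hfd := sub_eq_sub_one_of_det_eq_one hso hdet (add_pos hpos.diag_pos hpos.diag_pos)
  have hs : y₂ ^ 2 = (X 0 0 - 1) / 2 := hy₂ ▸ Real.sq_sqrt (by linarith)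
  have hs0 : y₂ ≠ 0 := hy₂ ▸ (Real.sqrt_pos.mpr (by linarith)).ne'
  rw [hy₁, hy₄, Phi21_eq_of_sub_eq_sub_one hso hfd hs hs0, ← hX]
end
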